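/- Let Δ ≤ S₁₁ be the maximal twelve tone group of signature (4,2,1,4), i.e., the subgroup of permutations of {1,...,11} preserving each of the blocks {1,2,3,4}, {5,6}, {7}, {8,9,10,11}. The unique maximal Δ-orbit of T₇ is the set of scales {0} ∪ A ∪ B ∪ {7} ∪ C where A is a 2-element subset of {1,2,3,4}, B a 1-element subset of {5,6}, and C a 2-element subset of {8,9,10,11}; this orbit has exactly 72 elements. -/

import Mathlib

/-- The maximal twelve tone group Δ of signature (4,2,1,4): permutations of ℤ₁₂ fixing 0
and preserving each of the blocks {1,2,3,4}, {5,6}, {7}, {8,9,10,11}. -/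
def Delta : Set (Equiv.Perm (ZMod 12)) :=
  {σ | σ 0 = 0 ∧ σ 7 = 7 ∧
    ({1, 2, 3, 4} : Finset (ZMod 12)).image ⇑σ = {1, 2, 3, 4} ∧
    ({5, 6} : Finset (ZMod 12)).image ⇑σ = {5, 6} ∧
    ({8, 9, 10, 11} : Finset (ZMod 12)).image ⇑σ = {8, 9, 10, 11}}

/-- The Δ-orbit of a scale. -/
def deltaOrbit (s : Finset (ZMod 12)) : Set (Finset (ZMod 12)) :=
  {t | ∃ σ ∈ Delta, t = s.image ⇑σ}

/-- The mēḷakarta scales {0} ∪ A ∪ B ∪ {7} ∪ C with A a 2-subset of {1,2,3,4},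
B a 1-subset of {5,6}, C a 2-subset of {8,9,10,11}. -/
def melakarta : Set (Finset (ZMod 12)) :=
  {s | ∃ A B C : Finset (ZMod 12),
    A ⊆ {1, 2, 3, 4} ∧ A.card = 2 ∧ B ⊆ {5, 6} ∧ B.card = 1 ∧
    C ⊆ {8, 9, 10, 11} ∧ C.card = 2 ∧
    s = {(0 : ZMod 12)} ∪ A ∪ B ∪ {7} ∪ C}

/-!
A permutation in Δ preserves how many notes of a scale lie in each block {0}, {1,2,3,4}, {5,6},
{7}, {8,9,10,11}; conversely two scales with the same block counts are related by a permutation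
that acts inside each block. So the Δ-orbits of scales are the classes of scales with a fixed
count vector (e, a, b, c, d), and such a class has C(1,e) C(4,a) C(2,b) C(1,c) C(4,d) elements.
For 7-note scales this product is at least 72 only for the count vector (1, 2, 1, 1, 2) of the
mēḷakarta scales, and equals 72 there.
-/

open Finset

section BlockPartition

variable {α ι : Type*} [DecidableEq ι] (block : α → ι)

def blockProfile (s : Finset α) (i : ι) : ℕ := #{x ∈ s | block x = i}

variable {block}

lemma sum_blockProfile [Fintype ι] (s : Finset α) : ∑ i, blockProfile block s i = #s :=
  (card_eq_sum_card_fiberwise fun x _ => mem_univ (block x)).symm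

lemma blockProfile_le [Fintype α] (s : Finset α) (i : ι) :
    blockProfile block s i ≤ #{x | block x = i} :=
  card_le_card (filter_subset_filter _ (subset_univ s))

variable [DecidableEq α]

lemma blockProfile_image {σ : Equiv.Perm α} (hσ : ∀ x, block (σ x) = block x)
    (s : Finset α) : blockProfile block (s.image σ) = blockProfile block s := by
  funext i
  simp only [blockProfile, filter_image, hσ]
  exact card_image_of_injective _ σ.injective

lemma filter_biUnion_block_eq {s : Finset ι} {f : ι → Finset α}
    (hf : ∀ j ∈ s, ∀ x ∈ f j, block x = j) {i : ι} (hi : i ∈ s) :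
    {x ∈ s.biUnion f | block x = i} = f i := by
  ext x
  simp only [mem_filter, mem_biUnion]
  constructor
  · rintro ⟨⟨j, hj, hx⟩, rfl⟩
    rwa [hf j hj x hx]
  · exact fun hx => ⟨⟨i, hi, hx⟩, hf i hi x hx⟩

variable [Fintype α]

lemma forall_block_apply_eq_iff {σ : Equiv.Perm α} :
    (∀ x, block (σ x) = block x) ↔
      ∀ i, ({x | block x = i} : Finset α).image σ = ({x | block x = i} : Finset α) := by
  constructor
  · intro hσ i
    refine eq_of_subset_of_card_le ?_ (card_image_of_injective _ σ.injective).ge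
    simp [image_subset_iff, hσ]
  · intro h x
    have hx : σ x ∈ ({y | block y = block x} : Finset α).image σ :=
      mem_image_of_mem σ (by simp)
    simpa [h] using hx

lemma card_subtype_block_mem_eq (s : Finset α) (i : ι) (b : Bool) :
    Fintype.card {x // (block x, decide (x ∈ s)) = (i, b)} =
      if b then blockProfile block s i else #{x | block x = i} - blockProfile block s i := by
  have hs : ({x | block x = i ∧ x ∈ s} : Finset α) = {x ∈ s | block x = i} := by
    ext; simp [and_comm]
  have hsplit := card_filter_add_card_filter_not (s := ({x | block x = i} : Finset α)) (· ∈ s)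
  simp only [filter_filter, hs] at hsplit
  cases b <;> simp [Fintype.card_subtype, blockProfile, hs, ← hsplit]

lemma exists_perm_image_eq_of_blockProfile_eq {s t : Finset α}
    (h : blockProfile block s = blockProfile block t) :
    ∃ σ : Equiv.Perm α, (∀ x, block (σ x) = block x) ∧ s.image σ = t := by
  -- Colour points by block and membership; equal profiles give equinumerous colour classes.
  have hcard : ∀ c : ι × Bool, Fintype.card {x // (block x, decide (x ∈ s)) = c} =
      Fintype.card {x // (block x, decide (x ∈ t)) = c} := by
    rintro ⟨i, b⟩
    rw [card_subtype_block_mem_eq, card_subtype_block_mem_eq, h]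
  have hσ := Equiv.ofFiberEquiv_map fun c => Fintype.equivOfCardEq (hcard c)
  set σ : Equiv.Perm α := Equiv.ofFiberEquiv fun c => Fintype.equivOfCardEq (hcard c)
  simp only [Prod.mk.injEq, decide_eq_decide] at hσ
  refine ⟨σ, fun x => (hσ x).1, ?_⟩
  ext y
  rw [← σ.apply_symm_apply y, σ.injective.mem_finset_image, (hσ _).2]

lemma card_setOf_blockProfile_eq [Fintype ι] (k : ι → ℕ) :
    Nat.card {t : Finset α | blockProfile block t = k} =
      ∏ i, (#{x | block x = i}).choose (k i) := by
  set P := Fintype.piFinset fun i => powersetCard (k i) ({x | block x = i} : Finset α)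
  have hP : ∀ f ∈ P, ∀ j ∈ univ, ∀ x ∈ f j, block x = j := by
    intro f hf j _ x hx
    simp only [P, Fintype.mem_piFinset, mem_powersetCard] at hf
    simpa using (hf j).1 hx
  have hinj :
      Set.InjOn (fun f : ι → Finset α => univ.biUnion f) (P : Set (ι → Finset α)) := by
    intro f hf g hg hfg
    funext i
    rw [← filter_biUnion_block_eq (hP f hf) (mem_univ i),
      ← filter_biUnion_block_eq (hP g hg) (mem_univ i)]
    exact congrArg _ hfg
  have hset :
      {t : Finset α | blockProfile block t = k} = ↑(P.image fun f => univ.biUnion f) := by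
    ext t
    simp only [Set.mem_ofPred_eq, coe_image, Set.mem_image, mem_coe]
    constructor
    · rintro rfl
      refine ⟨fun i => {x ∈ t | block x = i}, ?_,
        biUnion_filter_eq_of_maps_to fun _ _ => mem_univ _⟩
      simp [P, blockProfile, filter_subset_filter]
    · rintro ⟨f, hf, rfl⟩
      funext i
      rw [blockProfile, filter_biUnion_block_eq (hP f hf) (mem_univ i)]
      simp only [P, Fintype.mem_piFinset, mem_powersetCard] at hf
      exact (hf i).2
  rw [hset, Nat.card_coe_set_eq, Set.ncard_coe_finset, card_image_of_injOn hinj,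
    Fintype.card_piFinset]
  simp

end BlockPartition

lemma biUnion_univ_fin_five {β : Type*} [DecidableEq β] (f : Fin 5 → Finset β) :
    univ.biUnion f = f 0 ∪ f 1 ∪ f 2 ∪ f 3 ∪ f 4 := by
  simp [Fin.univ_succ, union_assoc]

def deltaBlock : ZMod 12 → Fin 5 := ![0, 1, 1, 1, 1, 2, 2, 3, 4, 4, 4, 4]

lemma deltaBlock_fibers :
    ({x | deltaBlock x = 0} : Finset (ZMod 12)) = {0} ∧
    ({x | deltaBlock x = 1} : Finset (ZMod 12)) = {1, 2, 3, 4} ∧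
    ({x | deltaBlock x = 2} : Finset (ZMod 12)) = {5, 6} ∧
    ({x | deltaBlock x = 3} : Finset (ZMod 12)) = {7} ∧
    ({x | deltaBlock x = 4} : Finset (ZMod 12)) = {8, 9, 10, 11} := by
  decide

lemma card_deltaBlock_fiber (i : Fin 5) :
    #({x | deltaBlock x = i} : Finset (ZMod 12)) = ![1, 4, 2, 1, 4] i := by
  revert i
  decide

lemma mem_Delta_iff {σ : Equiv.Perm (ZMod 12)} :
    σ ∈ Delta ↔ ∀ x, deltaBlock (σ x) = deltaBlock x := by
  obtain ⟨h0, h1, h2, h3, h4⟩ := deltaBlock_fibers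
  rw [forall_block_apply_eq_iff]
  constructor
  · rintro ⟨hσ0, hσ7, hB1, hB2, hB3⟩ i
    fin_cases i <;> simp [h0, h1, h2, h3, h4, hσ0, hσ7, hB1, hB2, hB3]
  · intro h
    exact ⟨by simpa [h0] using h 0, by simpa [h3] using h 3, by simpa [h1] using h 1,
      by simpa [h2] using h 2, by simpa [h4] using h 4⟩

lemma deltaOrbit_eq_setOf (s : Finset (ZMod 12)) :
    deltaOrbit s = {t | blockProfile deltaBlock t = blockProfile deltaBlock s} := by
  ext t
  constructor
  · rintro ⟨σ, hσ, rfl⟩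
    exact blockProfile_image (mem_Delta_iff.1 hσ) s
  · intro h
    obtain ⟨σ, hσ, rfl⟩ := exists_perm_image_eq_of_blockProfile_eq h.symm
    exact ⟨σ, mem_Delta_iff.2 hσ, rfl⟩

lemma blockProfile_of_mem_melakarta {t : Finset (ZMod 12)} (ht : t ∈ melakarta) :
    blockProfile deltaBlock t = ![1, 2, 1, 1, 2] := by
  obtain ⟨h0, h1, h2, h3, h4⟩ := deltaBlock_fibers
  obtain ⟨A, B, C, hA, hAc, hB, hBc, hC, hCc, rfl⟩ := ht
  have hsub {D : Finset (ZMod 12)} {i : Fin 5}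
      (hD : D ⊆ ({x | deltaBlock x = i} : Finset (ZMod 12))) : ∀ x ∈ D, deltaBlock x = i :=
    fun x hx => by simpa using hD hx
  have hf : ∀ j ∈ univ, ∀ x ∈ ![{0}, A, B, {7}, C] j, deltaBlock x = j := by
    intro j _
    fin_cases j
    exacts [hsub h0.le, hsub (h1 ▸ hA), hsub (h2 ▸ hB), hsub h3.le, hsub (h4 ▸ hC)]
  have ht : {0} ∪ A ∪ B ∪ {7} ∪ C = univ.biUnion ![{0}, A, B, {7}, C] :=
    (biUnion_univ_fin_five ![{0}, A, B, {7}, C]).symm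
  funext i
  rw [ht, blockProfile, filter_biUnion_block_eq hf (mem_univ i)]
  fin_cases i <;> simp [hAc, hBc, hCc]

lemma mem_melakarta_of_blockProfile_eq {t : Finset (ZMod 12)}
    (ht : blockProfile deltaBlock t = ![1, 2, 1, 1, 2]) : t ∈ melakarta := by
  obtain ⟨h0, h1, h2, h3, h4⟩ := deltaBlock_fibers
  have hfib (i : Fin 5) :
      {x ∈ t | deltaBlock x = i} ⊆ ({x | deltaBlock x = i} : Finset (ZMod 12)) :=
    filter_subset_filter _ (subset_univ t)
  have hsingle {i : Fin 5} {a : ZMod 12} (ha : ({x | deltaBlock x = i} : Finset _) = {a})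
      (hi : blockProfile deltaBlock t i = 1) : {x ∈ t | deltaBlock x = i} = {a} :=
    eq_of_subset_of_card_le (ha ▸ hfib i) (by simpa [blockProfile] using hi.ge)
  refine ⟨{x ∈ t | deltaBlock x = 1}, {x ∈ t | deltaBlock x = 2},
    {x ∈ t | deltaBlock x = 4}, h1 ▸ hfib 1, congrFun ht 1, h2 ▸ hfib 2, congrFun ht 2,
    h4 ▸ hfib 4, congrFun ht 4, ?_⟩
  rw [← hsingle h0 (congrFun ht 0), ← hsingle h3 (congrFun ht 3),
    ← biUnion_univ_fin_five fun i => {x ∈ t | deltaBlock x = i}]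
  exact (biUnion_filter_eq_of_maps_to fun _ _ => mem_univ _).symm

lemma melakarta_eq_setOf :
    melakarta = {t | blockProfile deltaBlock t = ![1, 2, 1, 1, 2]} :=
  Set.ext fun _ => ⟨blockProfile_of_mem_melakarta, mem_melakarta_of_blockProfile_eq⟩

lemma blockProfile_eq_of_le_card_deltaOrbit {s : Finset (ZMod 12)} (hs : #s = 7)
    (h : 72 ≤ Nat.card (deltaOrbit s)) : blockProfile deltaBlock s = ![1, 2, 1, 1, 2] := by
  have key : ∀ a ∈ range 2, ∀ b ∈ range 5, ∀ c ∈ range 3, ∀ d ∈ range 2,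
      ∀ e ∈ range 5, a + b + c + d + e = 7 →
      72 ≤ Nat.choose 1 a * Nat.choose 4 b * Nat.choose 2 c * Nat.choose 1 d * Nat.choose 4 e →
      a = 1 ∧ b = 2 ∧ c = 1 ∧ d = 1 ∧ e = 2 := by
    decide
  have hrange (i : Fin 5) : blockProfile deltaBlock s i ∈ range (![1, 4, 2, 1, 4] i + 1) :=
    mem_range_succ_iff.2 (card_deltaBlock_fiber i ▸ blockProfile_le s i)
  have hsum := sum_blockProfile (block := deltaBlock) s
  rw [deltaOrbit_eq_setOf, card_setOf_blockProfile_eq, Fin.prod_univ_five] at h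
  simp only [card_deltaBlock_fiber] at h
  rw [Fin.sum_univ_five, hs] at hsum
  obtain ⟨h0, h1, h2, h3, h4⟩ :=
    key _ (hrange 0) _ (hrange 1) _ (hrange 2) _ (hrange 3) _ (hrange 4) hsum h
  funext i
  fin_cases i <;> assumption

/-- Any maximal Δ-orbit of T₇ is the set of the 72 mēḷakarta scales. -/
theorem delta_maximal_orbit_eq_melakarta :
    (∀ s : Finset (ZMod 12), 0 ∈ s → s.card = 7 →
      (∀ t : Finset (ZMod 12), 0 ∈ t → t.card = 7 →
        Nat.card (deltaOrbit t) ≤ Nat.card (deltaOrbit s)) →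
      deltaOrbit s = melakarta) ∧
    Nat.card melakarta = 72 := by
  have hcard : Nat.card melakarta = 72 := by
    rw [melakarta_eq_setOf, card_setOf_blockProfile_eq]
    decide
  refine ⟨fun s _ hs hmax => ?_, hcard⟩
  have hprofile : blockProfile deltaBlock {0, 1, 2, 5, 7, 8, 9} = ![1, 2, 1, 1, 2] := by decide
  have h72 := hmax {0, 1, 2, 5, 7, 8, 9} (by decide) (by decide)
  rw [deltaOrbit_eq_setOf, hprofile, ← melakarta_eq_setOf, hcard] at h72
  rw [deltaOrbit_eq_setOf, blockProfile_eq_of_le_card_deltaOrbit hs h72, melakarta_eq_setOf]
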